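/- arXiv:2405.03508 — 2 statements merged into one kernel-verified Lean document; each statement's English description precedes it below -/
import Mathlib

section
/- A 0-chain of the orbit cancels decoupled fractions if and only if it can be written as a ℂ-linear combination of 0-chains induced by bicolored loops; moreover, if the 0-chain has integer coefficients, the combination can be chosen with integer coefficients. -/
/-!
A bicolored loop telescopes against every function of the form `f(u) + g(v)`, so chains of
loops cancel decoupled fractions. Conversely, testing a chain against the decoupled fractions
`X ^ k` and `Y ^ k` and using a Vandermonde argument shows that all its row sums and column sums
vanish. Regard the points of the orbit as the edges of the bipartite graph on rows and columns:
such a chain is then a cycle of that graph. A non-backtracking walk in its support alternating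
between rows and columns eventually revisits a vertex, which produces a simple bicolored loop;
subtracting a multiple of its chain removes a point from the support and keeps integer
coefficients integral, so induction on the size of the support concludes.
-/

open IntermediateField
open scoped BigOperators Classical

set_option synthInstance.maxHeartbeats 1000000
set_option maxHeartbeats 1600000

noncomputable section

namespace QuadrantWalk

variable {K : Type} [Field K] [Algebra ℂ K]

/-- Evaluation of the step (Laurent) polynomial `S(X,Y) = ∑ w_{i,j} X^i Y^j`
    at a pair of elements of a field. -/
def stepEval (St : Finset (ℤ × ℤ)) (w : ℤ × ℤ → ℂ) (u v : K) : K :=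
  ∑ p ∈ St, algebraMap ℂ K (w p) * u ^ p.1 * v ^ p.2

/-- The step polynomial involves both `X` and `Y`. -/
def NotUnivariate (St : Finset (ℤ × ℤ)) : Prop :=
  (∃ p ∈ St, ∃ q ∈ St, p.1 ≠ q.1) ∧ ∃ p ∈ St, ∃ q ∈ St, p.2 ≠ q.2

/-- The kernel polynomial `K̃(X,Y,t) = X^mx * Y^my * (1 - t·S(X,Y))` as an element of
`ℂ[X,Y,t]`, with variables `0 ↦ X`, `1 ↦ Y`, `2 ↦ t`. -/
def kernelPoly (St : Finset (ℤ × ℤ)) (w : ℤ × ℤ → ℂ) (mx my : ℕ) :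
    MvPolynomial (Fin 3) ℂ :=
  MvPolynomial.X 0 ^ mx * MvPolynomial.X 1 ^ my -
    MvPolynomial.X 2 *
      ∑ p ∈ St, MvPolynomial.C (w p) *
        MvPolynomial.X 0 ^ (p.1 + (mx : ℤ)).toNat *
        MvPolynomial.X 1 ^ (p.2 + (my : ℤ)).toNat

/-- `-mx` (resp. `-my`) is the smallest `X`-exponent (resp. `Y`-exponent) of the model. -/
structure ExponentBounds (St : Finset (ℤ × ℤ)) (mx my : ℕ) : Prop where
  lowerX : ∀ p ∈ St, -(mx : ℤ) ≤ p.1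
  lowerY : ∀ p ∈ St, -(my : ℤ) ≤ p.2
  attainX : ∃ p ∈ St, p.1 = -(mx : ℤ)
  attainY : ∃ p ∈ St, p.2 = -(my : ℤ)

/-- `x`-adjacency : equal first coordinates and equal values of `S`. -/
def XAdj (St : Finset (ℤ × ℤ)) (w : ℤ × ℤ → ℂ) (a b : K × K) : Prop :=
  a.1 = b.1 ∧ stepEval St w a.1 a.2 = stepEval St w b.1 b.2

/-- `y`-adjacency : equal second coordinates and equal values of `S`. -/
def YAdj (St : Finset (ℤ × ℤ)) (w : ℤ × ℤ → ℂ) (a b : K × K) : Prop :=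
  a.2 = b.2 ∧ stepEval St w a.1 a.2 = stepEval St w b.1 b.2

/-- Adjacency. -/
def Adj (St : Finset (ℤ × ℤ)) (w : ℤ × ℤ → ℂ) (a b : K × K) : Prop :=
  XAdj St w a b ∨ YAdj St w a b

/-- The orbit of the walk: the equivalence class of `(x,y)` under the
reflexive-transitive closure of adjacency. -/
def orbit (St : Finset (ℤ × ℤ)) (w : ℤ × ℤ → ℂ) (x y : K) : Set (K × K) :=
  {a | Relation.ReflTransGen (Adj St w) (x, y) a}

/-- `k = ℂ(S(x,y))`. -/
def kF (St : Finset (ℤ × ℤ)) (w : ℤ × ℤ → ℂ) (x y : K) : IntermediateField ℂ K :=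
  adjoin ℂ {stepEval St w x y}

/-- `k(x) = ℂ(x, S(x,y))`. -/
def kxF (St : Finset (ℤ × ℤ)) (w : ℤ × ℤ → ℂ) (x y : K) : IntermediateField ℂ K :=
  adjoin ℂ {x, stepEval St w x y}

/-- `k(y) = ℂ(y, S(x,y))`. -/
def kyF (St : Finset (ℤ × ℤ)) (w : ℤ × ℤ → ℂ) (x y : K) : IntermediateField ℂ K :=
  adjoin ℂ {y, stepEval St w x y}

/-- `k(x,y) = ℂ(x,y)`. -/
def kxyF (x y : K) : IntermediateField ℂ K := adjoin ℂ {x, y}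

/-- `k(𝒪)`: the subfield generated over `k` by all coordinates of the orbit. -/
def orbitF (St : Finset (ℤ × ℤ)) (w : ℤ × ℤ → ℂ) (x y : K) : IntermediateField ℂ K :=
  adjoin ℂ ({stepEval St w x y} ∪ {z | ∃ a ∈ orbit St w x y, z = a.1 ∨ z = a.2})

/-- The standing hypotheses: nonzero weights, a non-univariate step polynomial,
`x, y` algebraically independent over `ℂ`, and `𝕂` an algebraic closure of `ℂ(x,y)`. -/
structure Setting (St : Finset (ℤ × ℤ)) (w : ℤ × ℤ → ℂ) (x y : K) : Prop where
  weight_ne : ∀ p ∈ St, w p ≠ 0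
  notUniv : NotUnivariate St
  indep : AlgebraicIndependent ℂ ![x, y]
  algClosed : IsAlgClosed K
  algebraic : Algebra.IsAlgebraic (kxyF x y) K

lemma self_mem_orbit (St : Finset (ℤ × ℤ)) (w : ℤ × ℤ → ℂ) (x y : K) :
    (x, y) ∈ orbit St w x y := Relation.ReflTransGen.refl

lemma x_mem_orbitF (St : Finset (ℤ × ℤ)) (w : ℤ × ℤ → ℂ) (x y : K) :
    x ∈ orbitF St w x y := by
  apply subset_adjoin
  exact Set.mem_union_right _ ⟨(x, y), self_mem_orbit St w x y, Or.inl rfl⟩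

lemma y_mem_orbitF (St : Finset (ℤ × ℤ)) (w : ℤ × ℤ → ℂ) (x y : K) :
    y ∈ orbitF St w x y := by
  apply subset_adjoin
  exact Set.mem_union_right _ ⟨(x, y), self_mem_orbit St w x y, Or.inr rfl⟩

lemma S_mem_orbitF (St : Finset (ℤ × ℤ)) (w : ℤ × ℤ → ℂ) (x y : K) :
    stepEval St w x y ∈ orbitF St w x y := by
  apply subset_adjoin
  exact Set.mem_union_left _ rfl

lemma x_mem_kxF (St : Finset (ℤ × ℤ)) (w : ℤ × ℤ → ℂ) (x y : K) :
    x ∈ kxF St w x y :=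
  subset_adjoin ℂ _ (Set.mem_insert _ _)

lemma S_mem_kxF (St : Finset (ℤ × ℤ)) (w : ℤ × ℤ → ℂ) (x y : K) :
    stepEval St w x y ∈ kxF St w x y :=
  subset_adjoin ℂ _ (Set.mem_insert_of_mem _ rfl)

lemma y_mem_kyF (St : Finset (ℤ × ℤ)) (w : ℤ × ℤ → ℂ) (x y : K) :
    y ∈ kyF St w x y :=
  subset_adjoin ℂ _ (Set.mem_insert _ _)

lemma S_mem_kyF (St : Finset (ℤ × ℤ)) (w : ℤ × ℤ → ℂ) (x y : K) :
    stepEval St w x y ∈ kyF St w x y :=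
  subset_adjoin ℂ _ (Set.mem_insert_of_mem _ rfl)

/-- The subgroup of `ℂ`-automorphisms of `M` fixing the subfield `E` pointwise. -/
def fixingAuts (E M : IntermediateField ℂ K) : Subgroup (↥M ≃ₐ[ℂ] ↥M) where
  carrier := {σ | ∀ (z : K) (_ : z ∈ E) (hzM : z ∈ M), σ ⟨z, hzM⟩ = ⟨z, hzM⟩}
  one_mem' := fun _ _ _ => rfl
  mul_mem' := by
    intro σ τ hσ hτ z hzE hzM
    show σ (τ ⟨z, hzM⟩) = ⟨z, hzM⟩
    rw [hτ z hzE hzM, hσ z hzE hzM]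
  inv_mem' := by
    intro σ hσ z hzE hzM
    show σ.symm ⟨z, hzM⟩ = ⟨z, hzM⟩
    conv_lhs => rw [← hσ z hzE hzM]
    exact σ.symm_apply_apply _

/-- The Galois group `G_x = Gal(k(𝒪)|k(x))`. -/
def Gx (St : Finset (ℤ × ℤ)) (w : ℤ × ℤ → ℂ) (x y : K) :
    Subgroup (↥(orbitF St w x y) ≃ₐ[ℂ] ↥(orbitF St w x y)) :=
  fixingAuts (kxF St w x y) (orbitF St w x y)

/-- The Galois group `G_y = Gal(k(𝒪)|k(y))`. -/
def Gy (St : Finset (ℤ × ℤ)) (w : ℤ × ℤ → ℂ) (x y : K) :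
    Subgroup (↥(orbitF St w x y) ≃ₐ[ℂ] ↥(orbitF St w x y)) :=
  fixingAuts (kyF St w x y) (orbitF St w x y)

/-- The Galois group `G_{xy} = Gal(k(𝒪)|k(x,y))`. -/
def Gxy (St : Finset (ℤ × ℤ)) (w : ℤ × ℤ → ℂ) (x y : K) :
    Subgroup (↥(orbitF St w x y) ≃ₐ[ℂ] ↥(orbitF St w x y)) :=
  fixingAuts (kxyF x y) (orbitF St w x y)

/-- Extend an automorphism of an intermediate field to a map on all of `K`
(by the identity outside). -/
def extendAut {M : IntermediateField ℂ K} (σ : ↥M ≃ₐ[ℂ] ↥M) (z : K) : K :=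
  if h : z ∈ M then (σ ⟨z, h⟩ : K) else z

/-- The coordinate-wise action of an automorphism on a `0`-chain. -/
def actChain {M : IntermediateField ℂ K} (σ : ↥M ≃ₐ[ℂ] ↥M)
    (γ : (K × K) →₀ ℂ) : (K × K) →₀ ℂ :=
  Finsupp.mapDomain (Prod.map (extendAut σ) (extendAut σ)) γ

/-- Evaluation of a polynomial `P(X,Y,t)` at `(u, v, 1/S(x,y))` for `(u,v) = a`. -/
def evalPt (St : Finset (ℤ × ℤ)) (w : ℤ × ℤ → ℂ) (x y : K)
    (P : MvPolynomial (Fin 3) ℂ) (a : K × K) : K :=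
  MvPolynomial.aeval ![a.1, a.2, (stepEval St w x y)⁻¹] P

/-- Evaluation of a polynomial `P(X,Y,t)` at `(x, y, 1/S(x,y))`. -/
def evalXY (St : Finset (ℤ × ℤ)) (w : ℤ × ℤ → ℂ) (x y : K)
    (P : MvPolynomial (Fin 3) ℂ) : K :=
  evalPt St w x y P (x, y)

/-- Evaluation of the fraction `A/B` at `(a.1, a.2, 1/S(x,y))`. -/
def fracEval (St : Finset (ℤ × ℤ)) (w : ℤ × ℤ → ℂ) (x y : K)
    (A B : MvPolynomial (Fin 3) ℂ) (a : K × K) : K :=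
  evalPt St w x y A a / evalPt St w x y B a

/-- Evaluation (orbit sum) of the fraction `A/B` on a `0`-chain. -/
def chainEval (St : Finset (ℤ × ℤ)) (w : ℤ × ℤ → ℂ) (x y : K)
    (A B : MvPolynomial (Fin 3) ℂ) (γ : (K × K) →₀ ℂ) : K :=
  γ.sum fun a c => algebraMap ℂ K c * fracEval St w x y A B a

/-- A `0`-chain cancels decoupled fractions: the orbit sum of every regular fraction
of the form `F(X,t) + G(Y,t)` on it vanishes. -/
def CancelsDecoupled (St : Finset (ℤ × ℤ)) (w : ℤ × ℤ → ℂ) (mx my : ℕ)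
    (x y : K) (α : (K × K) →₀ ℂ) : Prop :=
  ∀ A₁ B₁ A₂ B₂ : MvPolynomial (Fin 3) ℂ,
    A₁ ∈ MvPolynomial.supported ℂ ({0, 2} : Set (Fin 3)) →
    B₁ ∈ MvPolynomial.supported ℂ ({0, 2} : Set (Fin 3)) →
    A₂ ∈ MvPolynomial.supported ℂ ({1, 2} : Set (Fin 3)) →
    B₂ ∈ MvPolynomial.supported ℂ ({1, 2} : Set (Fin 3)) →
    ¬ kernelPoly St w mx my ∣ B₁ → ¬ kernelPoly St w mx my ∣ B₂ →
    (α.sum fun a c =>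
      algebraMap ℂ K c * (fracEval St w x y A₁ B₁ a + fracEval St w x y A₂ B₂ a)) = 0

/-- The field of fractions `ℂ(X,Y,t)`. -/
abbrev FF : Type := FractionRing (MvPolynomial (Fin 3) ℂ)

/-- The inclusion of `ℂ[X,Y,t]` into `ℂ(X,Y,t)`. -/
def toFF (P : MvPolynomial (Fin 3) ℂ) : FF := algebraMap (MvPolynomial (Fin 3) ℂ) FF P

/-- The regular fraction `A/B` admits a Galois decoupling:
`A/B = F + G + K̃·R` with `F ∈ ℂ(X,t)`, `G ∈ ℂ(Y,t)` and `R` regular. -/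
def AdmitsDecoupling (St : Finset (ℤ × ℤ)) (w : ℤ × ℤ → ℂ) (mx my : ℕ)
    (A B : MvPolynomial (Fin 3) ℂ) : Prop :=
  ∃ F₁ F₂ G₁ G₂ R₁ R₂ : MvPolynomial (Fin 3) ℂ,
    F₁ ∈ MvPolynomial.supported ℂ ({0, 2} : Set (Fin 3)) ∧
    F₂ ∈ MvPolynomial.supported ℂ ({0, 2} : Set (Fin 3)) ∧
    G₁ ∈ MvPolynomial.supported ℂ ({1, 2} : Set (Fin 3)) ∧
    G₂ ∈ MvPolynomial.supported ℂ ({1, 2} : Set (Fin 3)) ∧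
    ¬ kernelPoly St w mx my ∣ F₂ ∧ ¬ kernelPoly St w mx my ∣ G₂ ∧
    ¬ kernelPoly St w mx my ∣ R₂ ∧
    toFF A / toFF B =
      toFF F₁ / toFF F₂ + toFF G₁ / toFF G₂ +
        toFF (kernelPoly St w mx my) * (toFF R₁ / toFF R₂)

/-- `(I, J) = (A/B, Cc/D)` is a pair of Galois invariants: `I - J = K̃·R` with `R` regular. -/
def IsInvariantPair (St : Finset (ℤ × ℤ)) (w : ℤ × ℤ → ℂ) (mx my : ℕ)
    (A B Cc D : MvPolynomial (Fin 3) ℂ) : Prop :=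
  ∃ R₁ R₂ : MvPolynomial (Fin 3) ℂ, ¬ kernelPoly St w mx my ∣ R₂ ∧
    toFF A / toFF B - toFF Cc / toFF D =
      toFF (kernelPoly St w mx my) * (toFF R₁ / toFF R₂)

/-- A constant pair of Galois invariants: both members are equivalent to a
common fraction `c ∈ ℂ(t)` modulo `K̃`. -/
def IsConstantPair (St : Finset (ℤ × ℤ)) (w : ℤ × ℤ → ℂ) (mx my : ℕ)
    (A B Cc D : MvPolynomial (Fin 3) ℂ) : Prop :=
  IsInvariantPair St w mx my A B Cc D ∧
  ∃ c₁ c₂ : MvPolynomial (Fin 3) ℂ,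
    c₁ ∈ MvPolynomial.supported ℂ ({2} : Set (Fin 3)) ∧
    c₂ ∈ MvPolynomial.supported ℂ ({2} : Set (Fin 3)) ∧ c₂ ≠ 0 ∧
    IsInvariantPair St w mx my A B c₁ c₂ ∧ IsInvariantPair St w mx my Cc D c₁ c₂

/-- `(γx, γy)` is a pseudo-decoupling of `(x,y)`. -/
def PseudoDecoupling (St : Finset (ℤ × ℤ)) (w : ℤ × ℤ → ℂ) (mx my : ℕ)
    (x y : K) (γx γy : (K × K) →₀ ℂ) : Prop :=
  ∀ A B : MvPolynomial (Fin 3) ℂ, ¬ kernelPoly St w mx my ∣ B →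
    AdmitsDecoupling St w mx my A B →
      fracEval St w x y A B (x, y) =
          chainEval St w x y A B γx + chainEval St w x y A B γy ∧
        chainEval St w x y A B γx ∈ kxF St w x y ∧
        chainEval St w x y A B γy ∈ kyF St w x y

/-- `(gx, gy, a)` is a decoupling of `(x,y)` in the orbit. -/
def IsDecoupling (St : Finset (ℤ × ℤ)) (w : ℤ × ℤ → ℂ) (mx my : ℕ)
    (x y : K) (gx gy a : (K × K) →₀ ℂ) : Prop :=
  Finsupp.single (x, y) (1 : ℂ) = gx + gy + a ∧
  (∀ σ ∈ Gx St w x y, actChain σ gx = gx) ∧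
  (∀ σ ∈ Gy St w x y, actChain σ gy = gy) ∧
  CancelsDecoupled St w mx my x y a

/-- The `x`-part of the boundary of a `1`-chain. -/
def boundaryX (St : Finset (ℤ × ℤ)) (w : ℤ × ℤ → ℂ)
    (c : ((K × K) × (K × K)) →₀ ℂ) : (K × K) →₀ ℂ :=
  c.sum fun e coeff =>
    if XAdj St w e.1 e.2 then
      coeff • (Finsupp.single e.2 (1 : ℂ) - Finsupp.single e.1 (1 : ℂ)) else 0

/-- The `y`-part of the boundary of a `1`-chain. -/
def boundaryY (St : Finset (ℤ × ℤ)) (w : ℤ × ℤ → ℂ)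
    (c : ((K × K) × (K × K)) →₀ ℂ) : (K × K) →₀ ℂ :=
  c.sum fun e coeff =>
    if YAdj St w e.1 e.2 then
      coeff • (Finsupp.single e.2 (1 : ℂ) - Finsupp.single e.1 (1 : ℂ)) else 0

/-- The `0`-chain induced by a bicolored loop. -/
def IsBicoloredChain (St : Finset (ℤ × ℤ)) (w : ℤ × ℤ → ℂ) (x y : K)
    (α : (K × K) →₀ ℂ) : Prop :=
  ∃ (n : ℕ) (b : ℕ → K × K), 0 < n ∧ b (2 * n) = b 0 ∧
    (∀ j < 2 * n, b j ∈ orbit St w x y) ∧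
    (∀ i < n, XAdj St w (b (2 * i)) (b (2 * i + 1)) ∧
      YAdj St w (b (2 * i + 1)) (b (2 * i + 2))) ∧
    α = ∑ j ∈ Finset.range (2 * n), ((-1 : ℂ) ^ (j + 1)) • Finsupp.single (b j) (1 : ℂ)

/-- The `0`-chain `ω = (1/|𝒪|) ∑_{a ∈ 𝒪} a`. -/
def omegaChain (St : Finset (ℤ × ℤ)) (w : ℤ × ℤ → ℂ) (x y : K)
    (h : (orbit St w x y).Finite) : (K × K) →₀ ℂ :=
  ((h.toFinset.card : ℂ))⁻¹ • ∑ a ∈ h.toFinset, Finsupp.single a (1 : ℂ)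

/-- The average `[G]·γ = (1/|G|) ∑_{σ ∈ G} σ·γ` of a `0`-chain under a group. -/
def groupAverage {M : IntermediateField ℂ K} (G : Subgroup (↥M ≃ₐ[ℂ] ↥M))
    (γ : (K × K) →₀ ℂ) : (K × K) →₀ ℂ :=
  ((Nat.card G : ℂ))⁻¹ • ∑ᶠ σ ∈ (G : Set (↥M ≃ₐ[ℂ] ↥M)), actChain σ γ

/-- `ℂ[X,t]` (two variables: `0` and `1`). -/
abbrev MvP2 : Type := MvPolynomial (Fin 2) ℂ

/-- `ℂ(X,t)`, the fraction field of `ℂ[X,t]`. -/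
abbrev CXt : Type := FractionRing MvP2

/-- Constants `ℂ → ℂ(X,t)`. -/
def cconst : ℂ →+* CXt := (algebraMap MvP2 CXt).comp (MvPolynomial.C)

/-- The first generator of `ℂ(X,t)`. -/
def gen0 : CXt := algebraMap MvP2 CXt (MvPolynomial.X 0)

/-- The second generator of `ℂ(X,t)`. -/
def gen1 : CXt := algebraMap MvP2 CXt (MvPolynomial.X 1)

/-- The kernel polynomial viewed as a polynomial in `Y` over `ℂ(X,t)`. -/
def kernelInY (St : Finset (ℤ × ℤ)) (w : ℤ × ℤ → ℂ) (mx my : ℕ) :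
    Polynomial CXt :=
  MvPolynomial.eval₂ ((Polynomial.C : CXt →+* Polynomial CXt).comp cconst)
    ![Polynomial.C gen0, Polynomial.X, Polynomial.C gen1]
    (kernelPoly St w mx my)

/-- The kernel polynomial viewed as a polynomial in `X` over `ℂ(Y,t)`. -/
def kernelInX (St : Finset (ℤ × ℤ)) (w : ℤ × ℤ → ℂ) (mx my : ℕ) :
    Polynomial CXt :=
  MvPolynomial.eval₂ ((Polynomial.C : CXt →+* Polynomial CXt).comp cconst)
    ![Polynomial.X, Polynomial.C gen0, Polynomial.C gen1]
    (kernelPoly St w mx my)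

/-- The kernel polynomial viewed as a polynomial in `X, Y` over `ℂ(t)`. -/
def kernelInXY (St : Finset (ℤ × ℤ)) (w : ℤ × ℤ → ℂ) (mx my : ℕ) :
    MvPolynomial (Fin 2) (RatFunc ℂ) :=
  MvPolynomial.eval₂
    ((MvPolynomial.C : RatFunc ℂ →+* MvPolynomial (Fin 2) (RatFunc ℂ)).comp
      (RatFunc.C : ℂ →+* RatFunc ℂ))
    ![MvPolynomial.X 0, MvPolynomial.X 1, MvPolynomial.C RatFunc.X]
    (kernelPoly St w mx my)

/-- The specialization `K̃(x, Y, 1/S(x,y))` as a polynomial in `Y` over `k(x)`. -/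
def kernelAtX (St : Finset (ℤ × ℤ)) (w : ℤ × ℤ → ℂ) (mx my : ℕ) (x y : K) :
    Polynomial ↥(kxF St w x y) :=
  MvPolynomial.aeval
    ![Polynomial.C (⟨x, x_mem_kxF St w x y⟩ : kxF St w x y), Polynomial.X,
      Polynomial.C (⟨(stepEval St w x y)⁻¹, inv_mem (S_mem_kxF St w x y)⟩ : kxF St w x y)]
    (kernelPoly St w mx my)

/-- The specialization `K̃(X, y, 1/S(x,y))` as a polynomial in `X` over `k(y)`. -/
def kernelAtY (St : Finset (ℤ × ℤ)) (w : ℤ × ℤ → ℂ) (mx my : ℕ) (x y : K) :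
    Polynomial ↥(kyF St w x y) :=
  MvPolynomial.aeval
    ![Polynomial.X, Polynomial.C (⟨y, y_mem_kyF St w x y⟩ : kyF St w x y),
      Polynomial.C (⟨(stepEval St w x y)⁻¹, inv_mem (S_mem_kyF St w x y)⟩ : kyF St w x y)]
    (kernelPoly St w mx my)

/-- Values of regular fractions with numerator and denominator supported on a set
of variables. -/
def regRange (St : Finset (ℤ × ℤ)) (w : ℤ × ℤ → ℂ) (x y : K) (mx my : ℕ)
    (s : Set (Fin 3)) : Set K :=
  {z | ∃ A B : MvPolynomial (Fin 3) ℂ,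
    A ∈ MvPolynomial.supported ℂ s ∧ B ∈ MvPolynomial.supported ℂ s ∧
    ¬ kernelPoly St w mx my ∣ B ∧ z = evalXY St w x y A / evalXY St w x y B}

end QuadrantWalk

lemma Finsupp.exists_ne_map_eq_of_mapDomain_eq_zero {X Y M : Type*} [AddCommMonoid M]
    {f : X → Y} {α : X →₀ M} (h : Finsupp.mapDomain f α = 0) {a : X} (ha : a ∈ α.support) :
    ∃ b ∈ α.support, b ≠ a ∧ f b = f a := by
  by_contra! hcon
  have : Finsupp.mapDomain f α (f a) = α a := by
    rw [Finsupp.mapDomain, Finsupp.sum_apply, Finsupp.sum, Finset.sum_eq_single a]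
    · simp
    · intro b hb hba; simp [hcon b hb hba]
    · intro h; exact absurd ha h
  rw [h] at this
  exact Finsupp.mem_support_iff.mp ha this.symm

lemma Finsupp.eq_zero_of_forall_sum_mul_pow_eq_zero {R F : Type*} [Field R] [Field F] [Algebra R F]
    (f : F →₀ R) (h : ∀ k : ℕ, (f.sum fun u c => algebraMap R F c * u ^ k) = 0) : f = 0 := by
  ext u
  by_contra hu
  have hmem : u ∈ f.support := Finsupp.mem_support_iff.mpr hu
  -- pair `f` with the Lagrange polynomial that is `1` at `u` and `0` on the rest of the support
  set Q := Lagrange.basis f.support id u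
  have hQ : (f.sum fun v c => algebraMap R F c * Q.eval v) = 0 := by
    simp_rw [Finsupp.sum, Polynomial.eval_eq_sum_range, Finset.mul_sum]
    rw [Finset.sum_comm]
    refine Finset.sum_eq_zero fun k _ => ?_
    simpa [Finsupp.sum, Finset.mul_sum, mul_left_comm] using congrArg (Q.coeff k * ·) (h k)
  rw [Finsupp.sum, Finset.sum_eq_single u] at hQ
  · have h1 : Q.eval u = 1 := Lagrange.eval_basis_self (v := id) (Set.injOn_id _) hmem
    exact hu (by simpa [h1] using hQ)
  · intro v hv hvu
    have h0 : Q.eval v = 0 := Lagrange.eval_basis_of_ne (v := id) hvu.symm hv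
    simp [h0]
  · exact fun h => absurd hmem h

lemma MvPolynomial.aeval_eq_of_mem_supported {σ R A : Type*} [CommSemiring R] [CommSemiring A]
    [Algebra R A] {s : Set σ} {P : MvPolynomial σ R} (hP : P ∈ MvPolynomial.supported R s)
    {v v' : σ → A} (h : Set.EqOn v v' s) : MvPolynomial.aeval v P = MvPolynomial.aeval v' P := by
  rw [MvPolynomial.mem_supported] at hP
  exact MvPolynomial.hom_congr_vars (f₁ := (MvPolynomial.aeval v).toRingHom)
    (f₂ := (MvPolynomial.aeval v').toRingHom) (by ext; simp) (fun i hi _ => by simp [h (hP hi)]) rfl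

lemma MvPolynomial.coeff_sum_monomial_of_injOn {σ ι R : Type*} [CommSemiring R] {s : Finset ι}
    {e : ι → σ →₀ ℕ} (he : Set.InjOn e s) (c : ι → R) {i : ι} (hi : i ∈ s) :
    MvPolynomial.coeff (e i) (∑ j ∈ s, MvPolynomial.monomial (e j) (c j)) = c i := by
  rw [MvPolynomial.coeff_sum, Finset.sum_eq_single i]
  · simp
  · intro j hj hji
    rw [MvPolynomial.coeff_monomial, if_neg fun h => hji (he hj hi h)]
  · exact fun h => absurd hi h

lemma pow_toNat_add_natCast {F : Type*} [Field F] {u : F} (hu : u ≠ 0) {n : ℤ} {m : ℕ}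
    (h : -(m : ℤ) ≤ n) : u ^ (n + m).toNat = u ^ m * u ^ n := by
  rw [← zpow_natCast, Int.toNat_of_nonneg (by omega), zpow_add₀ hu, zpow_natCast, mul_comm]

namespace QuadrantWalk

section AltLoop

variable {ι κ : Type*}

/-- A bicolored loop on an arbitrary grid `ι × κ`, with the condition on `S` dropped: inside the
orbit it holds automatically (`setOf_isBicoloredChain_eq`). -/
structure IsAltLoop (n : ℕ) (q : ℕ → ι × κ) : Prop where
  closed : q (2 * n) = q 0
  fst_eq : ∀ i < n, (q (2 * i)).1 = (q (2 * i + 1)).1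
  snd_eq : ∀ i < n, (q (2 * i + 1)).2 = (q (2 * i + 2)).2

variable (R : Type*) [Ring R]

def altChain (n : ℕ) (q : ℕ → ι × κ) : (ι × κ) →₀ R :=
  ∑ j ∈ Finset.range (2 * n), ((-1 : R) ^ (j + 1)) • Finsupp.single (q j) (1 : R)

def loopChains (s : Set (ι × κ)) : Set ((ι × κ) →₀ R) :=
  {β | ∃ n q, 0 < n ∧ IsAltLoop n q ∧ (∀ j < 2 * n, q j ∈ s) ∧ β = altChain R n q}

variable {R}

lemma sum_range_two_mul_neg_one_pow_smul_eq_zero {M : Type*} [AddCommGroup M] [Module R M]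
    (F : ℕ → M) (n : ℕ) (h : ∀ i < n, F (2 * i) = F (2 * i + 1)) :
    ∑ j ∈ Finset.range (2 * n), (-1 : R) ^ (j + 1) • F j = 0 := by
  induction n with
  | zero => simp
  | succ n ih =>
    rw [show 2 * (n + 1) = 2 * n + 1 + 1 by ring, Finset.sum_range_succ, Finset.sum_range_succ,
      ih fun i hi => h i (by omega), h n (by omega)]
    simp [pow_succ, pow_mul]

variable {n : ℕ} {q : ℕ → ι × κ}

lemma IsAltLoop.sum_fst_eq_zero {M : Type*} [AddCommGroup M] [Module R M] (hq : IsAltLoop n q)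
    (f : ι → M) : ∑ j ∈ Finset.range (2 * n), (-1 : R) ^ (j + 1) • f (q j).1 = 0 :=
  sum_range_two_mul_neg_one_pow_smul_eq_zero _ n fun i hi => by rw [hq.fst_eq i hi]

lemma IsAltLoop.sum_snd_eq_zero {M : Type*} [AddCommGroup M] [Module R M] (hq : IsAltLoop n q)
    (g : κ → M) : ∑ j ∈ Finset.range (2 * n), (-1 : R) ^ (j + 1) • g (q j).2 = 0 := by
  set F : ℕ → M := fun j => (-1 : R) ^ (j + 1) • g (q j).2
  -- the loop is closed, so the sum is invariant under the shift `j ↦ j + 1`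
  have hshift : ∑ j ∈ Finset.range (2 * n), F j = ∑ j ∈ Finset.range (2 * n), F (j + 1) := by
    have hF : F (2 * n) = F 0 := by simp [F, hq.closed, pow_succ, pow_mul]
    have := Finset.sum_range_succ F (2 * n)
    rw [Finset.sum_range_succ', hF] at this
    exact add_right_cancel this.symm
  rw [hshift, ← neg_eq_zero, ← Finset.sum_neg_distrib]
  convert sum_range_two_mul_neg_one_pow_smul_eq_zero (R := R) (fun j => g (q (j + 1)).2) n
    (fun i hi => by rw [hq.snd_eq i hi]) using 2 with j
  simp [F, pow_succ]

lemma IsAltLoop.mapDomain_fst_altChain (hq : IsAltLoop n q) :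
    Finsupp.mapDomain Prod.fst (altChain R n q) = 0 := by
  simpa [altChain, Finsupp.mapDomain_finsetSum, Finsupp.mapDomain_smul] using
    hq.sum_fst_eq_zero (R := R) fun u => Finsupp.single u (1 : R)

lemma IsAltLoop.mapDomain_snd_altChain (hq : IsAltLoop n q) :
    Finsupp.mapDomain Prod.snd (altChain R n q) = 0 := by
  simpa [altChain, Finsupp.mapDomain_finsetSum, Finsupp.mapDomain_smul] using
    hq.sum_snd_eq_zero (R := R) fun v => Finsupp.single v (1 : R)

lemma IsAltLoop.linearCombination_altChain {M : Type*} [AddCommGroup M] [Module R M]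
    (hq : IsAltLoop n q) (f : ι → M) (g : κ → M) :
    Finsupp.linearCombination R (fun a => f a.1 + g a.2) (altChain R n q) = 0 := by
  simp only [altChain, map_sum, map_smul, Finsupp.linearCombination_single, one_smul, smul_add,
    Finset.sum_add_distrib, hq.sum_fst_eq_zero, hq.sum_snd_eq_zero, add_zero]

lemma altChain_apply (p : ι × κ) :
    altChain R n q p = ∑ j ∈ Finset.range (2 * n), if q j = p then (-1 : R) ^ (j + 1) else 0 := by
  simp [altChain, Finsupp.finsetSum_apply, Finsupp.single_apply]

lemma exists_int_altChain_apply (p : ι × κ) : ∃ m : ℤ, altChain R n q p = m :=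
  ⟨∑ j ∈ Finset.range (2 * n), if q j = p then (-1) ^ (j + 1) else 0, by
    rw [altChain_apply]; push_cast; rfl⟩

lemma altChain_apply_of_injOn (hq : Set.InjOn q (Set.Iio (2 * n))) {j : ℕ} (hj : j < 2 * n) :
    altChain R n q (q j) = (-1) ^ (j + 1) := by
  rw [altChain_apply, Finset.sum_eq_single j]
  · simp
  · intro i hi hij
    rw [if_neg fun h => hij (hq (Finset.mem_range.mp hi) hj h)]
  · simp [hj]

lemma support_altChain_subset : (altChain R n q).support ⊆ (Finset.range (2 * n)).image q := by
  intro p hp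
  rw [Finsupp.mem_support_iff, altChain_apply] at hp
  obtain ⟨j, hj, hjp⟩ := Finset.exists_ne_zero_of_sum_ne_zero hp
  exact Finset.mem_image.mpr ⟨j, hj, by_contra fun h => hjp (if_neg h)⟩


structure IsAltWalk (p : ℕ → ι × κ) : Prop where
  fst_eq : ∀ m, Even m → (p m).1 = (p (m + 1)).1
  snd_eq : ∀ m, Odd m → (p m).2 = (p (m + 1)).2

lemma IsAltWalk.isAltLoop {p : ℕ → ι × κ} (hp : IsAltWalk p) (h : p (2 * n) = p 0) :
    IsAltLoop n p :=
  ⟨h, fun i _ => hp.fst_eq _ (even_two_mul i), fun i _ => hp.snd_eq _ (odd_two_mul_add_one i)⟩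

/-- In the bipartite graph whose vertices are the rows and the columns and whose edges are the
points, an alternating walk `p` is a walk along the edges `p m`, entering `p m` through
`walkVertex p m` and leaving it through `walkVertex p (m + 1)`. -/
def walkVertex (p : ℕ → ι × κ) (m : ℕ) : ι ⊕ κ :=
  if Even m then .inr (p m).2 else .inl (p m).1

variable {p : ℕ → ι × κ}

lemma IsAltWalk.walkVertex_succ (hp : IsAltWalk p) (m : ℕ) :
    walkVertex p (m + 1) = if Even m then .inl (p m).1 else .inr (p m).2 := by
  rcases Nat.even_or_odd m with hm | hm
  · simp [walkVertex, hm, Nat.even_add_one, hp.fst_eq m hm]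
  · simp [walkVertex, hm.add_one, Nat.not_even_iff_odd.mpr hm, hp.snd_eq m hm]

lemma even_iff_of_walkVertex_eq {i j : ℕ} (h : walkVertex p i = walkVertex p j) :
    Even i ↔ Even j := by
  by_cases hi : Even i <;> by_cases hj : Even j <;> simp [walkVertex, hi, hj] at h ⊢

lemma IsAltWalk.adj_of_walkVertex_eq (hp : IsAltWalk p) {m m' : ℕ}
    (h : walkVertex p (m + 1) = walkVertex p m') :
    (Even m → (p m).1 = (p m').1) ∧ (Odd m → (p m).2 = (p m').2) := by
  have hpar := even_iff_of_walkVertex_eq h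
  rw [hp.walkVertex_succ, walkVertex] at h
  rw [Nat.even_add_one] at hpar
  by_cases hm : Even m
  · simp [hm, show ¬Even m' by tauto] at h
    exact ⟨fun _ => h, fun h' => absurd hm (Nat.not_even_iff_odd.mpr h')⟩
  · simp [hm, show Even m' by tauto] at h
    exact ⟨fun h' => absurd h' hm, fun _ => h⟩

lemma walkVertex_eq_of_eq {i j : ℕ} (hij : p i = p j) (hpar : Even i ↔ Even j) :
    walkVertex p i = walkVertex p j := by
  simp [walkVertex, hij, hpar]

lemma IsAltWalk.walkVertex_succ_eq_of_eq (hp : IsAltWalk p) {i j : ℕ} (hij : p i = p j)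
    (hpar : Even i ↔ ¬Even j) : walkVertex p (i + 1) = walkVertex p j := by
  rw [hp.walkVertex_succ, walkVertex]
  by_cases hi : Even i <;> simp_all

lemma IsAltWalk.injOn_Ico (hp : IsAltWalk p) (hback : ∀ m, p (m + 1) ≠ p m) {r T : ℕ}
    (hvert : Set.InjOn (walkVertex p) (Set.Iio T)) (hrT : walkVertex p r = walkVertex p T)
    (hr : r < T) : Set.InjOn p (Set.Ico r T) := by
  have key : ∀ i j, r ≤ i → i < j → j < T → p i ≠ p j := by
    intro i j hri hij hjT hpij
    by_cases hpar : Even i ↔ Even j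
    · exact hij.ne (hvert (by simp; omega) (by simp; omega) (walkVertex_eq_of_eq hpij hpar))
    have hpar' : Even i ↔ ¬Even j := by tauto
    -- the edge `p i = p j` is traversed in both directions
    have h1 : i + 1 = j := hvert (by simp; omega) (by simp; omega)
      (hp.walkVertex_succ_eq_of_eq hpij hpar')
    have h2 : walkVertex p (j + 1) = walkVertex p i :=
      hp.walkVertex_succ_eq_of_eq hpij.symm (by tauto)
    have hjT : j + 1 = T := by
      by_contra hne
      have := hvert (by simp; omega) (by simp; omega) h2
      omega
    have hir : i = r := hvert (by simp; omega) (by simp; omega) (by rw [← h2, hjT, hrT])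
    exact hback i (by rw [h1, hpij])
  intro i hi j hj hij
  simp only [Set.mem_Ico] at hi hj
  rcases lt_trichotomy i j with h | h | h
  · exact absurd hij (key i j hi.1 h hj.2)
  · exact h
  · exact absurd hij.symm (key j i hj.1 h hi.2)

lemma exists_walkVertex_first_return {s : Set (ι × κ)} (hs : s.Finite) (hps : ∀ m, p m ∈ s) :
    ∃ r T, r < T ∧ walkVertex p r = walkVertex p T ∧ Set.InjOn (walkVertex p) (Set.Iio T) := by
  have hrep : ∃ T r, r < T ∧ walkVertex p r = walkVertex p T := by
    have hfin : (Sum.inl '' (Prod.fst '' s) ∪ Sum.inr '' (Prod.snd '' s) : Set (ι ⊕ κ)).Finite :=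
      ((hs.image _).image _).union ((hs.image _).image _)
    obtain ⟨r, T, hrT, h⟩ := hfin.exists_lt_map_eq_of_forall_mem (f := walkVertex p) fun m => by
      unfold walkVertex; split_ifs
      exacts [Or.inr ⟨_, ⟨_, hps m, rfl⟩, rfl⟩, Or.inl ⟨_, ⟨_, hps m, rfl⟩, rfl⟩]
    exact ⟨T, r, hrT, h⟩
  obtain ⟨r, hrT, hvrT⟩ := Nat.find_spec hrep
  refine ⟨r, Nat.find hrep, hrT, hvrT, fun i hi j hj hij => ?_⟩
  by_contra hne
  rcases lt_or_gt_of_ne hne with h | h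
  exacts [Nat.find_min hrep hj ⟨i, h, hij⟩, Nat.find_min hrep hi ⟨j, h, hij.symm⟩]

lemma IsAltWalk.exists_injOn_altLoop (hp : IsAltWalk p) (hback : ∀ m, p (m + 1) ≠ p m)
    {r T : ℕ} (hrT : r < T) (hvrT : walkVertex p r = walkVertex p T)
    (hvert : Set.InjOn (walkVertex p) (Set.Iio T)) {s : Set (ι × κ)} (hps : ∀ m, p m ∈ s) :
    ∃ n q, 0 < n ∧ IsAltLoop n q ∧ (∀ j, q j ∈ s) ∧ Set.InjOn q (Set.Iio (2 * n)) := by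
  have hinj := hp.injOn_Ico hback hvert hvrT hrT
  obtain ⟨n, hn⟩ : Even (T - r) := (Nat.even_sub hrT.le).mpr (even_iff_of_walkVertex_eq hvrT).symm
  have hn0 : 0 < n := by omega
  -- start the loop at an even time, so that its first move is along a row
  set e := if Even r then 0 else 1
  have hre : Even (r + e) := by
    by_cases hr : Even r
    · simp [e, hr]
    · simpa [e, hr] using (Nat.not_even_iff_odd.mp hr).add_one
  have hmod : ∀ j, (j + e) % (2 * n) < 2 * n := fun j => Nat.mod_lt _ (by omega)
  have hpar : ∀ j, Even (r + (j + e) % (2 * n)) ↔ Even j := by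
    intro j
    have hdm := Nat.div_add_mod (j + e) (2 * n)
    rw [mul_assoc] at hdm
    generalize n * ((j + e) / (2 * n)) = c at hdm
    obtain ⟨d, hd⟩ := hre
    simp only [Nat.even_iff]
    omega
  have hnext : ∀ j, walkVertex p (r + (j + e) % (2 * n) + 1) =
      walkVertex p (r + (j + 1 + e) % (2 * n)) := by
    intro j
    rw [show j + 1 + e = j + e + 1 by ring, Nat.add_mod (j + e), Nat.one_mod_eq_one.mpr (by omega)]
    by_cases h : (j + e) % (2 * n) + 1 < 2 * n
    · rw [Nat.mod_eq_of_lt h, add_assoc]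
    · replace h : (j + e) % (2 * n) + 1 = 2 * n := by have := hmod j; omega
      rw [h, Nat.mod_self, add_zero, add_assoc, h, show r + 2 * n = T by omega, hvrT]
  refine ⟨n, fun j => p (r + (j + e) % (2 * n)), hn0, IsAltWalk.isAltLoop ⟨?_, ?_⟩ ?_,
    fun j => hps _, ?_⟩
  · exact fun j hj => (hp.adj_of_walkVertex_eq (hnext j)).1 ((hpar j).mpr hj)
  · exact fun j hj => (hp.adj_of_walkVertex_eq (hnext j)).2
      (Nat.not_even_iff_odd.mp fun h => Nat.not_even_iff_odd.mpr hj ((hpar j).mp h))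
  · simp
  · intro j hj k hk hjk
    have := hinj (by simp only [Set.mem_Ico]; have := hmod j; omega)
      (by simp only [Set.mem_Ico]; have := hmod k; omega) hjk
    have hjk' : j ≡ k [MOD 2 * n] := Nat.ModEq.add_right_cancel' e (Nat.add_left_cancel this)
    rwa [Nat.ModEq, Nat.mod_eq_of_lt hj, Nat.mod_eq_of_lt hk] at hjk'

lemma exists_isAltWalk {s : Set (ι × κ)} {a₀ : ι × κ} (ha₀ : a₀ ∈ s)
    (hrow : ∀ a ∈ s, ∃ b ∈ s, b ≠ a ∧ b.1 = a.1) (hcol : ∀ a ∈ s, ∃ b ∈ s, b ≠ a ∧ b.2 = a.2) :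
    ∃ p, IsAltWalk p ∧ (∀ m, p (m + 1) ≠ p m) ∧ ∀ m, p m ∈ s := by
  choose! pr hpr using hrow
  choose! pc hpc using hcol
  let p : ℕ → ι × κ := fun m => Nat.rec a₀ (fun m a => if Even m then pr a else pc a) m
  have hsucc : ∀ m, p (m + 1) = if Even m then pr (p m) else pc (p m) := fun _ => rfl
  have hmem : ∀ m, p m ∈ s := by
    intro m
    induction m with
    | zero => exact ha₀
    | succ m ih => rw [hsucc]; split_ifs; exacts [(hpr _ ih).1, (hpc _ ih).1]
  refine ⟨p, ⟨fun m hm => ?_, fun m hm => ?_⟩, fun m => ?_, hmem⟩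
  · rw [hsucc, if_pos hm]; exact ((hpr _ (hmem m)).2.2).symm
  · rw [hsucc, if_neg (Nat.not_even_iff_odd.mpr hm)]; exact ((hpc _ (hmem m)).2.2).symm
  · rw [hsucc]; split_ifs; exacts [(hpr _ (hmem m)).2.1, (hpc _ (hmem m)).2.1]

lemma exists_injOn_altLoop {α : (ι × κ) →₀ R} (hα : α ≠ 0)
    (hrow : Finsupp.mapDomain Prod.fst α = 0) (hcol : Finsupp.mapDomain Prod.snd α = 0) :
    ∃ n q, 0 < n ∧ IsAltLoop n q ∧ (∀ j, q j ∈ α.support) ∧ Set.InjOn q (Set.Iio (2 * n)) := by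
  obtain ⟨a₀, ha₀⟩ := Finsupp.support_nonempty_iff.mpr hα
  obtain ⟨p, hp, hback, hps⟩ := exists_isAltWalk (ι := ι) (κ := κ) (s := ↑α.support) ha₀
    (fun _ ha => Finsupp.exists_ne_map_eq_of_mapDomain_eq_zero hrow ha)
    (fun _ ha => Finsupp.exists_ne_map_eq_of_mapDomain_eq_zero hcol ha)
  obtain ⟨r, T, hrT, hvrT, hvert⟩ := exists_walkVertex_first_return α.support.finite_toSet hps
  exact hp.exists_injOn_altLoop hback hrT hvrT hvert hps

/-- `M` is the group of allowed coefficients (all of `R` for spans, the image of `ℤ` for integer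
combinations); peeling off loops keeps coefficients in `M` since loop chains are integral. -/
theorem mem_closure_smul_loopChains (M : AddSubgroup R) {s : Set (ι × κ)} {α : (ι × κ) →₀ R}
    (hs : ↑α.support ⊆ s) (hrow : Finsupp.mapDomain Prod.fst α = 0)
    (hcol : Finsupp.mapDomain Prod.snd α = 0) (hM : ∀ a, α a ∈ M) :
    α ∈ AddSubgroup.closure {γ | ∃ c ∈ M, ∃ β ∈ loopChains R s, γ = c • β} := by
  induction h : α.support.card using Nat.strong_induction_on generalizing α with
  | _ N ih =>
  by_cases hα : α = 0
  · rw [hα]; exact zero_mem _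
  obtain ⟨n, q, hn, hq, hqα, hinj⟩ := exists_injOn_altLoop hα hrow hcol
  set β := altChain R n q
  set c := α (q 1)
  have hβ : β (q 1) = 1 := by
    rw [altChain_apply_of_injOn hinj (by omega)]; norm_num
  have hsupp : (α - c • β).support ⊆ α.support.erase (q 1) := by
    intro a ha
    rw [Finsupp.mem_support_iff] at ha
    refine Finset.mem_erase.mpr ⟨fun h => ha (by simp [h, hβ, c]), ?_⟩
    by_contra haα
    have hβa : β a = 0 := Finsupp.notMem_support_iff.mp fun h => by
      obtain ⟨j, -, rfl⟩ := Finset.mem_image.mp (support_altChain_subset h)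
      exact haα (hqα j)
    exact ha (by simp [Finsupp.notMem_support_iff.mp haα, hβa])
  have hloop : c • β ∈ {γ | ∃ c ∈ M, ∃ β ∈ loopChains R s, γ = c • β} :=
    ⟨c, hM _, β, ⟨n, q, hn, hq, fun j _ => hs (hqα j), rfl⟩, rfl⟩
  have hrest : α - c • β ∈ AddSubgroup.closure {γ | ∃ c ∈ M, ∃ β ∈ loopChains R s, γ = c • β} := by
    refine ih _ ?_ (fun a ha => hs (Finset.erase_subset _ _ (hsupp ha))) ?_ ?_ ?_ rfl
    · rw [← h]
      exact (Finset.card_le_card hsupp).trans_lt (Finset.card_erase_lt_of_mem (hqα 1))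
    · have hβrow : Finsupp.mapDomain Prod.fst β = 0 := hq.mapDomain_fst_altChain
      simp [Finsupp.mapDomain_sub, Finsupp.mapDomain_smul, hrow, hβrow]
    · have hβcol : Finsupp.mapDomain Prod.snd β = 0 := hq.mapDomain_snd_altChain
      simp [Finsupp.mapDomain_sub, Finsupp.mapDomain_smul, hcol, hβcol]
    · intro a
      obtain ⟨m, hm⟩ : ∃ m : ℤ, β a = m := exists_int_altChain_apply a
      rw [Finsupp.sub_apply, Finsupp.smul_apply, smul_eq_mul, hm, ← Int.cast_comm, ← zsmul_eq_mul]
      exact sub_mem (hM a) (M.zsmul_mem (hM _) m)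
  simpa using add_mem hrest (AddSubgroup.subset_closure hloop)

end AltLoop

section Model

variable {K : Type} [Field K] [Algebra ℂ K] {St : Finset (ℤ × ℤ)} {w : ℤ × ℤ → ℂ} {x y : K}
  {mx my : ℕ}

lemma stepEval_eq_of_mem_orbit {a : K × K} (ha : a ∈ orbit St w x y) :
    stepEval St w a.1 a.2 = stepEval St w x y := by
  induction ha with
  | refl => rfl
  | tail _ h ih => rcases h with h | h <;> exact h.2.symm.trans ih

lemma setOf_isBicoloredChain_eq :
    {β | IsBicoloredChain St w x y β} = loopChains ℂ (orbit St w x y) := by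
  ext β
  constructor
  · rintro ⟨n, b, hn, hclose, horb, hadj, rfl⟩
    exact ⟨n, b, hn, ⟨hclose, fun i hi => (hadj i hi).1.1, fun i hi => (hadj i hi).2.1⟩, horb, rfl⟩
  · rintro ⟨n, q, hn, hq, horb, rfl⟩
    have horb' : ∀ j ≤ 2 * n, q j ∈ orbit St w x y := fun j hj => by
      rcases hj.lt_or_eq with hj | rfl
      exacts [horb j hj, hq.closed ▸ horb 0 (by omega)]
    have hS : ∀ i j, i ≤ 2 * n → j ≤ 2 * n →
        stepEval St w (q i).1 (q i).2 = stepEval St w (q j).1 (q j).2 := fun i j hi hj =>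
      (stepEval_eq_of_mem_orbit (horb' i hi)).trans (stepEval_eq_of_mem_orbit (horb' j hj)).symm
    exact ⟨n, q, hn, hq.closed, horb, fun i hi =>
      ⟨⟨hq.fst_eq i hi, hS _ _ (by omega) (by omega)⟩,
        ⟨hq.snd_eq i hi, hS _ _ (by omega) (by omega)⟩⟩, rfl⟩

lemma fracEval_eq_of_fst_eq {A B : MvPolynomial (Fin 3) ℂ}
    (hA : A ∈ MvPolynomial.supported ℂ ({0, 2} : Set (Fin 3)))
    (hB : B ∈ MvPolynomial.supported ℂ ({0, 2} : Set (Fin 3))) {a b : K × K} (h : a.1 = b.1) :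
    fracEval St w x y A B a = fracEval St w x y A B b := by
  have hv : Set.EqOn ![a.1, a.2, (stepEval St w x y)⁻¹] ![b.1, b.2, (stepEval St w x y)⁻¹]
      ({0, 2} : Set (Fin 3)) := by
    rintro i (rfl | rfl) <;> simp [h]
  simp only [fracEval, evalPt, MvPolynomial.aeval_eq_of_mem_supported hA hv,
    MvPolynomial.aeval_eq_of_mem_supported hB hv]

lemma fracEval_eq_of_snd_eq {A B : MvPolynomial (Fin 3) ℂ}
    (hA : A ∈ MvPolynomial.supported ℂ ({1, 2} : Set (Fin 3)))
    (hB : B ∈ MvPolynomial.supported ℂ ({1, 2} : Set (Fin 3))) {a b : K × K} (h : a.2 = b.2) :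
    fracEval St w x y A B a = fracEval St w x y A B b := by
  have hv : Set.EqOn ![a.1, a.2, (stepEval St w x y)⁻¹] ![b.1, b.2, (stepEval St w x y)⁻¹]
      ({1, 2} : Set (Fin 3)) := by
    rintro i (rfl | rfl) <;> simp [h]
  simp only [fracEval, evalPt, MvPolynomial.aeval_eq_of_mem_supported hA hv,
    MvPolynomial.aeval_eq_of_mem_supported hB hv]

lemma sum_algebraMap_mul_eq_linearCombination (α : (K × K) →₀ ℂ) (φ : K × K → K) :
    (α.sum fun a c => algebraMap ℂ K c * φ a) = Finsupp.linearCombination ℂ φ α := by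
  simp [Finsupp.linearCombination_apply, Algebra.smul_def]

lemma cancelsDecoupled_of_mem_span {α : (K × K) →₀ ℂ}
    (hα : α ∈ Submodule.span ℂ {β | IsBicoloredChain St w x y β}) :
    CancelsDecoupled St w mx my x y α := by
  intro A₁ B₁ A₂ B₂ hA₁ hB₁ hA₂ hB₂ _ _
  rw [sum_algebraMap_mul_eq_linearCombination, ← LinearMap.mem_ker]
  refine Submodule.span_le.mpr ?_ hα
  rw [setOf_isBicoloredChain_eq]
  rintro _ ⟨n, q, -, hq, -, rfl⟩
  have hφ : (fun a : K × K => fracEval St w x y A₁ B₁ a + fracEval St w x y A₂ B₂ a) =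
      fun a => fracEval St w x y A₁ B₁ (a.1, 0) + fracEval St w x y A₂ B₂ (0, a.2) := by
    funext a
    congr 1
    exacts [fracEval_eq_of_fst_eq hA₁ hB₁ rfl, fracEval_eq_of_snd_eq hA₂ hB₂ rfl]
  rw [SetLike.mem_coe, LinearMap.mem_ker, hφ]
  exact hq.linearCombination_altChain (fun u => fracEval St w x y A₁ B₁ (u, 0))
    (fun v => fracEval St w x y A₂ B₂ (0, v))

lemma sum_mul_pow_toNat_eq (hb : ExponentBounds St mx my) {u v : K} (hu : u ≠ 0) (hv : v ≠ 0) :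
    ∑ p ∈ St, algebraMap ℂ K (w p) * u ^ (p.1 + mx).toNat * v ^ (p.2 + my).toNat =
      u ^ mx * v ^ my * stepEval St w u v := by
  rw [stepEval, Finset.mul_sum]
  refine Finset.sum_congr rfl fun p hp => ?_
  rw [pow_toNat_add_natCast hu (hb.lowerX p hp), pow_toNat_add_natCast hv (hb.lowerY p hp)]
  ring

lemma Setting.x_ne_zero (hset : Setting St w x y) : x ≠ 0 := by
  simpa using hset.indep.ne_zero 0

lemma Setting.y_ne_zero (hset : Setting St w x y) : y ≠ 0 := by
  simpa using hset.indep.ne_zero 1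

lemma Setting.stepEval_ne_zero (hset : Setting St w x y) (hb : ExponentBounds St mx my) :
    stepEval St w x y ≠ 0 := by
  -- `x ^ mx * y ^ my * S(x,y)` is the value at `(x, y)` of a nonzero polynomial
  set e : ℤ × ℤ → Fin 2 →₀ ℕ := fun p =>
    Finsupp.single 0 (p.1 + mx).toNat + Finsupp.single 1 (p.2 + my).toNat
  have he : Set.InjOn e St := by
    intro p hp p' hp' h
    have h0 := DFunLike.congr_fun h 0
    have h1 := DFunLike.congr_fun h 1
    simp [e] at h0 h1
    have := hb.lowerX p hp; have := hb.lowerX p' hp'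
    have := hb.lowerY p hp; have := hb.lowerY p' hp'
    exact Prod.ext (by omega) (by omega)
  set P : MvPolynomial (Fin 2) ℂ := ∑ p ∈ St, MvPolynomial.monomial (e p) (w p)
  have hP : MvPolynomial.aeval ![x, y] P = x ^ mx * y ^ my * stepEval St w x y := by
    rw [← sum_mul_pow_toNat_eq hb hset.x_ne_zero hset.y_ne_zero]
    simp [P, e, MvPolynomial.aeval_monomial, Finsupp.prod_add_index', pow_add, mul_assoc]
  obtain ⟨⟨p₀, hp₀, -⟩, -⟩ := hset.notUniv
  intro hS
  have hP0 : P = 0 := hset.indep (by rw [hP, hS, mul_zero, map_zero])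
  have : MvPolynomial.coeff (e p₀) P = w p₀ := MvPolynomial.coeff_sum_monomial_of_injOn he w hp₀
  rw [hP0, MvPolynomial.coeff_zero] at this
  exact hset.weight_ne p₀ hp₀ this.symm

lemma aeval_kernelPoly (hset : Setting St w x y) (hb : ExponentBounds St mx my) :
    MvPolynomial.aeval ![x, y, (stepEval St w x y)⁻¹] (kernelPoly St w mx my) = 0 := by
  simp [kernelPoly, sum_mul_pow_toNat_eq hb hset.x_ne_zero hset.y_ne_zero]
  field_simp [hset.stepEval_ne_zero hb]
  ring

lemma kernelPoly_not_dvd_one (hset : Setting St w x y) (hb : ExponentBounds St mx my) :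
    ¬kernelPoly St w mx my ∣ 1 := by
  rintro ⟨c, hc⟩
  simpa [aeval_kernelPoly hset hb] using
    congrArg (MvPolynomial.aeval ![x, y, (stepEval St w x y)⁻¹]) hc

lemma CancelsDecoupled.mapDomain_fst_eq_zero (hset : Setting St w x y)
    (hb : ExponentBounds St mx my) {α : (K × K) →₀ ℂ} (hc : CancelsDecoupled St w mx my x y α) :
    Finsupp.mapDomain Prod.fst α = 0 := by
  refine Finsupp.eq_zero_of_forall_sum_mul_pow_eq_zero _ fun k => ?_
  have hX : (MvPolynomial.X 0 : MvPolynomial (Fin 3) ℂ) ^ k ∈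
      MvPolynomial.supported ℂ ({0, 2} : Set (Fin 3)) :=
    pow_mem (MvPolynomial.X_mem_supported.mpr (by simp)) k
  have hnd := kernelPoly_not_dvd_one hset hb
  rw [Finsupp.sum_mapDomain_index (by simp) (by simp [add_mul])]
  simpa [fracEval, evalPt] using hc _ 1 0 1 hX (one_mem _) (zero_mem _) (one_mem _) hnd hnd

lemma CancelsDecoupled.mapDomain_snd_eq_zero (hset : Setting St w x y)
    (hb : ExponentBounds St mx my) {α : (K × K) →₀ ℂ} (hc : CancelsDecoupled St w mx my x y α) :
    Finsupp.mapDomain Prod.snd α = 0 := by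
  refine Finsupp.eq_zero_of_forall_sum_mul_pow_eq_zero _ fun k => ?_
  have hY : (MvPolynomial.X 1 : MvPolynomial (Fin 3) ℂ) ^ k ∈
      MvPolynomial.supported ℂ ({1, 2} : Set (Fin 3)) :=
    pow_mem (MvPolynomial.X_mem_supported.mpr (by simp)) k
  have hnd := kernelPoly_not_dvd_one hset hb
  rw [Finsupp.sum_mapDomain_index (by simp) (by simp [add_mul])]
  simpa [fracEval, evalPt] using hc 0 1 _ 1 (zero_mem _) (one_mem _) hY (one_mem _) hnd hnd

end Model

/-- a `0`-chain of the orbit cancels decoupled fractions iff it is a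
`ℂ`-linear combination of `0`-chains induced by bicolored loops; if it has integer
coefficients, the combination can be taken with integer coefficients. -/
theorem stmt16 {K : Type} [Field K] [Algebra ℂ K]
    (St : Finset (ℤ × ℤ)) (w : ℤ × ℤ → ℂ) (x y : K) (mx my : ℕ)
    (hset : Setting St w x y) (hb : ExponentBounds St mx my)
    (α : (K × K) →₀ ℂ) (hα : ↑α.support ⊆ orbit St w x y) :
    (CancelsDecoupled St w mx my x y α ↔
      α ∈ Submodule.span ℂ {β : (K × K) →₀ ℂ | IsBicoloredChain St w x y β}) ∧
    (CancelsDecoupled St w mx my x y α → (∀ p, ∃ m : ℤ, α p = (m : ℂ)) →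
      α ∈ AddSubgroup.closure {β : (K × K) →₀ ℂ | IsBicoloredChain St w x y β}) := by
  have hdecomp : ∀ M : AddSubgroup ℂ, CancelsDecoupled St w mx my x y α → (∀ a, α a ∈ M) →
      α ∈ AddSubgroup.closure
        {γ | ∃ c ∈ M, ∃ β ∈ {β | IsBicoloredChain St w x y β}, γ = c • β} := fun M hc hM => by
    rw [setOf_isBicoloredChain_eq]
    exact mem_closure_smul_loopChains M hα (hc.mapDomain_fst_eq_zero hset hb)
      (hc.mapDomain_snd_eq_zero hset hb) hM
  refine ⟨⟨fun hc => ?_, cancelsDecoupled_of_mem_span⟩, fun hc hint => ?_⟩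
  · refine (AddSubgroup.closure_le (Submodule.span ℂ _).toAddSubgroup).mpr ?_
      (hdecomp ⊤ hc fun _ => trivial)
    rintro _ ⟨c, -, β, hβ, rfl⟩
    exact Submodule.smul_mem _ c (Submodule.subset_span hβ)
  · refine (AddSubgroup.closure_le _).mpr ?_
      (hdecomp (Int.castAddHom ℂ).range hc fun a => (hint a).imp fun m hm => hm.symm)
    rintro _ ⟨_, ⟨m, rfl⟩, β, hβ, rfl⟩
    simpa [Int.cast_smul_eq_zsmul] using zsmul_mem (AddSubgroup.subset_closure hβ) m

end QuadrantWalk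
end
end

section
/- If the orbit 𝒪 is finite, then (x,y) admits a decoupling in the orbit with rational coefficients: there exist 0-chains γ̃x, γ̃y, α, all with coefficients in ℚ, such that (x,y) = γ̃x + γ̃y + α, σ·γ̃x = γ̃x for all σ ∈ G_x, σ·γ̃y = γ̃y for all σ ∈ G_y, and α cancels decoupled fractions. -/
open IntermediateField
open scoped BigOperators Classical

set_option synthInstance.maxHeartbeats 1000000
set_option maxHeartbeats 1600000

noncomputable section

/-!
The evaluation of a decoupled fraction `F(X,t) + G(Y,t)` on a `0`-chain only depends on the two
coordinate projections of the chain, its pushforwards along `(u,v) ↦ u` and `(u,v) ↦ v`. It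
therefore suffices to find a `G_x`-invariant `γx` and a `G_y`-invariant `γy` whose projections add
up to `(δ_x, δ_y)`, the projections of `(x,y)`.

An `x`-step of the walk keeps the first coordinate and a `y`-step the second, so following a path
in `𝒪` from `(x,y)` to `(u,v)` produces a rational chain with projections `(δ_x, δ_v)`. Averaging
these over `𝒪` gives a chain `c` with projections `(δ_x, ν)`, where `ν` is the second projection
of the uniform measure `ω` on `𝒪`. Both Galois groups permute the finite orbit, hence fix `ν`;
`G_x` fixes `x` and `G_y` fixes `y`. Averaging `c` over its finitely many `G_x`-conjugates and
`(x,y) - c` over its `G_y`-conjugates gives `γx` and `γy` with projections `(δ_x, ν)` and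
`(0, δ_y - ν)`.
-/

theorem Representation.exists_fixed_mem_span_of_finite_orbit {k G V W : Type*} [Field k]
    [CharZero k] [Group G] [AddCommGroup V] [Module k V] [AddCommGroup W] [Module k W]
    (ρ : Representation k G V) {c : V} (hc : (Set.range fun g => ρ g c).Finite)
    (f : V →ₗ[k] W) (hf : ∀ g, f (ρ g c) = f c) :
    ∃ a ∈ Submodule.span k (Set.range fun g => ρ g c), (∀ g, ρ g a = a) ∧ f a = f c := by
  set s := hc.toFinset
  have mem_s : ∀ {v}, v ∈ s ↔ ∃ g, ρ g c = v := by simp [s]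
  have hcs : c ∈ s := mem_s.2 ⟨1, by simp⟩
  have maps : ∀ g, ∀ v ∈ s, ρ g v ∈ s := by
    rintro g v hv
    obtain ⟨h, rfl⟩ := mem_s.1 hv
    exact mem_s.2 ⟨g * h, by simp⟩
  have hperm : ∀ g, ∑ v ∈ s, ρ g v = ∑ v ∈ s, v := fun g =>
    Finset.sum_nbij' (ρ g) (ρ g⁻¹) (maps g) (maps g⁻¹)
      (fun v _ => by simp [← Module.End.mul_apply, ← map_mul])
      (fun v _ => by simp [← Module.End.mul_apply, ← map_mul]) (fun _ _ => rfl)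
  have hcard : (s.card : k) ≠ 0 := Nat.cast_ne_zero.2 (Finset.card_ne_zero_of_mem hcs)
  refine ⟨(s.card : k)⁻¹ • ∑ v ∈ s, v, ?_, fun g => by rw [map_smul, map_sum, hperm], ?_⟩
  · exact Submodule.smul_mem _ _ (Submodule.sum_mem _ fun v hv =>
      Submodule.subset_span (hc.mem_toFinset.1 hv))
  · have hconst : ∀ v ∈ s, f v = f c := fun v hv => by
      obtain ⟨g, rfl⟩ := mem_s.1 hv
      exact hf g
    rw [map_smul, map_sum, Finset.sum_congr rfl hconst, Finset.sum_const,
      ← Nat.cast_smul_eq_nsmul k, smul_smul, inv_mul_cancel₀ hcard, one_smul]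

theorem MvPolynomial.aeval_eq_of_mem_supported_s19 {σ R S : Type*} [CommSemiring R]
    [CommSemiring S] [Algebra R S] {s : Set σ} {p : MvPolynomial σ R} (hp : p ∈ supported R s)
    {v₁ v₂ : σ → S} (h : ∀ i ∈ s, v₁ i = v₂ i) : aeval v₁ p = aeval v₂ p := by
  rw [supported_eq_range_rename] at hp
  obtain ⟨q, rfl⟩ := hp
  simp only [AlgHom.toRingHom_eq_coe, RingHom.coe_coe, aeval_rename]
  congr 2
  funext i
  exact h i i.2

namespace Finsupp

theorem finite_setOf_mapDomain_mapsTo {α M : Type*} [AddCommMonoid M] {s : Set α}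
    (hs : s.Finite) {c : α →₀ M} (hc : ↑c.support ⊆ s) :
    {d | ∃ φ : α → α, Set.MapsTo φ s s ∧ d = c.mapDomain φ}.Finite := by
  have := hs.to_subtype
  refine (Set.finite_range fun ψ : s → s =>
    c.mapDomain fun a => if h : a ∈ s then (ψ ⟨a, h⟩ : α) else a).subset ?_
  rintro _ ⟨φ, hφ, rfl⟩
  exact ⟨fun a => ⟨φ a, hφ a.2⟩, mapDomain_congr fun a ha => by simp [hc ha]⟩

theorem mapDomain_sum_single_of_bijOn {α M : Type*} [AddCommMonoid M] {s : Finset α}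
    {φ : α → α} (hφ : Set.BijOn φ s s) (m : M) :
    (∑ a ∈ s, single a m).mapDomain φ = ∑ a ∈ s, single a m := by
  rw [mapDomain_finsetSum]
  simp only [mapDomain_single]
  exact Finset.sum_nbij φ (fun a ha => hφ.mapsTo ha) hφ.injOn hφ.surjOn fun _ _ => rfl

section Prod

variable {α β γ δ M : Type*} [AddCommMonoid M]

theorem mapDomain_fst_mapDomain_prodMap (φ : α → γ) (ψ : β → δ) (c : α × β →₀ M) :
    (c.mapDomain (Prod.map φ ψ)).mapDomain Prod.fst = (c.mapDomain Prod.fst).mapDomain φ := by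
  rw [← mapDomain_comp, ← mapDomain_comp]
  rfl

theorem mapDomain_snd_mapDomain_prodMap (φ : α → γ) (ψ : β → δ) (c : α × β →₀ M) :
    (c.mapDomain (Prod.map φ ψ)).mapDomain Prod.snd = (c.mapDomain Prod.snd).mapDomain ψ := by
  rw [← mapDomain_comp, ← mapDomain_comp]
  rfl

end Prod

section Evaluation

variable {α β γ R A : Type*} [CommSemiring R] [Semiring A] [Algebra R A]

theorem sum_algebraMap_mul_eq_zero_of_mapDomain_eq_zero {c : α →₀ R} {π : α → γ}
    (hπ : c.mapDomain π = 0) (H : γ → A) :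
    (c.sum fun a r => algebraMap R A r * H (π a)) = 0 := by
  rw [← sum_mapDomain_index (h := fun u r => algebraMap R A r * H u) (by simp)
    (by simp [add_mul]), hπ, sum_zero_index]

theorem sum_algebraMap_mul_add_eq_zero {c : α × β →₀ R} (h₁ : c.mapDomain Prod.fst = 0)
    (h₂ : c.mapDomain Prod.snd = 0) (F : α → A) (G : β → A) :
    (c.sum fun a r => algebraMap R A r * (F a.1 + G a.2)) = 0 := by
  simp only [mul_add]
  rw [sum_add, sum_algebraMap_mul_eq_zero_of_mapDomain_eq_zero h₁,
    sum_algebraMap_mul_eq_zero_of_mapDomain_eq_zero h₂, add_zero]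

end Evaluation

end Finsupp

theorem Relation.ReflTransGen.exists_finsupp_mapDomain_fst_snd {α β R : Type*} [Ring R]
    {r : α × β → α × β → Prop} (hr : ∀ a b, r a b → a.1 = b.1 ∨ a.2 = b.2) {p a : α × β}
    (h : Relation.ReflTransGen r p a) :
    ∃ d ∈ Finsupp.supported R R {b | Relation.ReflTransGen r p b},
      d.mapDomain Prod.fst = Finsupp.single p.1 1 ∧
        d.mapDomain Prod.snd = Finsupp.single a.2 1 := by
  induction h with
  | refl =>
    exact ⟨Finsupp.single p 1, Finsupp.single_mem_supported R 1 Relation.ReflTransGen.refl,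
      Finsupp.mapDomain_single, Finsupp.mapDomain_single⟩
  | @tail b c hpb hbc ih =>
    obtain ⟨d, hd, h₁, h₂⟩ := ih
    rcases hr b c hbc with hfst | hsnd
    · refine ⟨d - Finsupp.single b 1 + Finsupp.single c 1,
        add_mem (sub_mem hd (Finsupp.single_mem_supported R 1 hpb))
          (Finsupp.single_mem_supported R 1 (hpb.tail hbc)), ?_, ?_⟩ <;>
      simp [Finsupp.mapDomain_add, Finsupp.mapDomain_sub, h₁, h₂, hfst]
    · exact ⟨d, hd, h₁, hsnd ▸ h₂⟩

namespace QuadrantWalk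

open Finsupp

variable {K : Type} [Field K] [Algebra ℂ K]

theorem map_stepEval (St : Finset (ℤ × ℤ)) (w : ℤ × ℤ → ℂ) {L L' : Type} {F : Type*} [Field L]
    [Field L'] [Algebra ℂ L] [Algebra ℂ L'] [FunLike F L L'] [AlgHomClass F ℂ L L'] (f : F)
    (u v : L) : f (stepEval St w u v) = stepEval St w (f u) (f v) := by
  simp [stepEval, map_zpow₀, AlgHomClass.commutes]

theorem Adj.fst_eq_or_snd_eq {St : Finset (ℤ × ℤ)} {w : ℤ × ℤ → ℂ} {a b : K × K}
    (h : Adj St w a b) : a.1 = b.1 ∨ a.2 = b.2 :=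
  h.imp And.left And.left

section ExtendAut

variable {M : IntermediateField ℂ K}

theorem extendAut_coe (σ : M ≃ₐ[ℂ] M) (u : M) : extendAut σ u = σ u := dif_pos u.2

theorem extendAut_one : extendAut (1 : M ≃ₐ[ℂ] M) = id := by
  funext z
  unfold extendAut
  split_ifs <;> rfl

theorem extendAut_mul (σ τ : M ≃ₐ[ℂ] M) : extendAut (σ * τ) = extendAut σ ∘ extendAut τ := by
  funext z
  by_cases hz : z ∈ M <;> simp [extendAut, hz]

theorem extendAut_injective (σ : M ≃ₐ[ℂ] M) : Function.Injective (extendAut σ) :=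
  Function.LeftInverse.injective (g := extendAut σ⁻¹) fun z => by
    rw [← Function.comp_apply (f := extendAut σ⁻¹), ← extendAut_mul, inv_mul_cancel,
      extendAut_one, id]

theorem extendAut_eq_self_of_mem_fixingAuts {E : IntermediateField ℂ K} {σ : M ≃ₐ[ℂ] M}
    (hσ : σ ∈ fixingAuts E M) {z : K} (hE : z ∈ E) (hM : z ∈ M) : extendAut σ z = z := by
  rw [extendAut, dif_pos hM, hσ z hE hM]

theorem extendAut_stepEval (St : Finset (ℤ × ℤ)) (w : ℤ × ℤ → ℂ) (σ : M ≃ₐ[ℂ] M) {u v : K}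
    (hu : u ∈ M) (hv : v ∈ M) :
    extendAut σ (stepEval St w u v) = stepEval St w (extendAut σ u) (extendAut σ v) := by
  lift u to M using hu
  lift v to M using hv
  have hcoe : stepEval St w (u : K) (v : K) = ↑(stepEval St w u v) :=
    (map_stepEval St w M.val u v).symm
  rw [hcoe, extendAut_coe, extendAut_coe, extendAut_coe, map_stepEval]
  exact map_stepEval St w M.val _ _

/-- Chains are built with rational coefficients and cast to `ℂ` only at the end
(`actChain_mapRange_ratCast`), so that the rationality of the decoupling is automatic. -/
def chainRep (M : IntermediateField ℂ K) : Representation ℚ (M ≃ₐ[ℂ] M) ((K × K) →₀ ℚ) where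
  toFun σ := lmapDomain ℚ ℚ (Prod.map (extendAut σ) (extendAut σ))
  map_one' := by
    rw [extendAut_one, Prod.map_id, lmapDomain_id]
    rfl
  map_mul' σ τ := by
    rw [extendAut_mul, ← Prod.map_comp_map, lmapDomain_comp]
    rfl

theorem actChain_mapRange_ratCast (σ : M ≃ₐ[ℂ] M) (γ : (K × K) →₀ ℚ) :
    actChain σ (γ.mapRange ((↑) : ℚ → ℂ) Rat.cast_zero) =
      (chainRep M σ γ).mapRange ((↑) : ℚ → ℂ) Rat.cast_zero :=
  mapDomain_mapRange _ _ _ _ Rat.cast_add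

end ExtendAut

section Orbit

variable {St : Finset (ℤ × ℤ)} {w : ℤ × ℤ → ℂ} {x y : K}

theorem coords_mem_orbitF {a : K × K} (ha : a ∈ orbit St w x y) :
    a.1 ∈ orbitF St w x y ∧ a.2 ∈ orbitF St w x y :=
  ⟨subset_adjoin _ _ (Or.inr ⟨a, ha, Or.inl rfl⟩), subset_adjoin _ _ (Or.inr ⟨a, ha, Or.inr rfl⟩)⟩

theorem Adj.prodMap_extendAut {σ : orbitF St w x y ≃ₐ[ℂ] orbitF St w x y} {a b : K × K}
    (ha : a ∈ orbit St w x y) (hb : b ∈ orbit St w x y) (h : Adj St w a b) :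
    Adj St w (Prod.map (extendAut σ) (extendAut σ) a)
      (Prod.map (extendAut σ) (extendAut σ) b) := by
  have hS : stepEval St w (extendAut σ a.1) (extendAut σ a.2) =
      stepEval St w (extendAut σ b.1) (extendAut σ b.2) := by
    rw [← extendAut_stepEval St w σ (coords_mem_orbitF ha).1 (coords_mem_orbitF ha).2,
      ← extendAut_stepEval St w σ (coords_mem_orbitF hb).1 (coords_mem_orbitF hb).2,
      h.elim And.right And.right]
  exact h.imp (fun h => ⟨congrArg (extendAut σ) h.1, hS⟩)
    (fun h => ⟨congrArg (extendAut σ) h.1, hS⟩)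

theorem mapsTo_orbit_of_fixed {σ : orbitF St w x y ≃ₐ[ℂ] orbitF St w x y}
    (hxy : extendAut σ x = x ∨ extendAut σ y = y)
    (hS : extendAut σ (stepEval St w x y) = stepEval St w x y) :
    Set.MapsTo (Prod.map (extendAut σ) (extendAut σ)) (orbit St w x y) (orbit St w x y) := by
  have hS' := extendAut_stepEval St w σ (x_mem_orbitF St w x y) (y_mem_orbitF St w x y)
  rw [hS] at hS'
  have hadj : Adj St w (x, y) (extendAut σ x, extendAut σ y) :=
    hxy.imp (fun hx => ⟨hx.symm, hS'⟩) (fun hy => ⟨hy.symm, hS'⟩)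
  intro a ha
  induction ha with
  | refl => exact .single hadj
  | tail hab hbc ih => exact ih.tail (hbc.prodMap_extendAut hab (hab.tail hbc))

theorem extendAut_x_of_mem_Gx {σ : orbitF St w x y ≃ₐ[ℂ] orbitF St w x y}
    (hσ : σ ∈ Gx St w x y) : extendAut σ x = x :=
  extendAut_eq_self_of_mem_fixingAuts hσ (x_mem_kxF St w x y) (x_mem_orbitF St w x y)

theorem extendAut_y_of_mem_Gy {σ : orbitF St w x y ≃ₐ[ℂ] orbitF St w x y}
    (hσ : σ ∈ Gy St w x y) : extendAut σ y = y :=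
  extendAut_eq_self_of_mem_fixingAuts hσ (y_mem_kyF St w x y) (y_mem_orbitF St w x y)

theorem mapsTo_orbit_of_mem_Gx {σ : orbitF St w x y ≃ₐ[ℂ] orbitF St w x y}
    (hσ : σ ∈ Gx St w x y) :
    Set.MapsTo (Prod.map (extendAut σ) (extendAut σ)) (orbit St w x y) (orbit St w x y) :=
  mapsTo_orbit_of_fixed (.inl (extendAut_x_of_mem_Gx hσ))
    (extendAut_eq_self_of_mem_fixingAuts hσ (S_mem_kxF St w x y) (S_mem_orbitF St w x y))

theorem mapsTo_orbit_of_mem_Gy {σ : orbitF St w x y ≃ₐ[ℂ] orbitF St w x y}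
    (hσ : σ ∈ Gy St w x y) :
    Set.MapsTo (Prod.map (extendAut σ) (extendAut σ)) (orbit St w x y) (orbit St w x y) :=
  mapsTo_orbit_of_fixed (.inr (extendAut_y_of_mem_Gy hσ))
    (extendAut_eq_self_of_mem_fixingAuts hσ (S_mem_kyF St w x y) (S_mem_orbitF St w x y))

/-- The rational counterpart of `omegaChain`. -/
def orbitMean (hfin : (orbit St w x y).Finite) : (K × K) →₀ ℚ :=
  ∑ a ∈ hfin.toFinset, single a (hfin.toFinset.card : ℚ)⁻¹

theorem mapDomain_snd_orbitMean_of_mapsTo (hfin : (orbit St w x y).Finite)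
    {σ : orbitF St w x y ≃ₐ[ℂ] orbitF St w x y}
    (hσ : Set.MapsTo (Prod.map (extendAut σ) (extendAut σ)) (orbit St w x y) (orbit St w x y)) :
    ((orbitMean hfin).mapDomain Prod.snd).mapDomain (extendAut σ) =
      (orbitMean hfin).mapDomain Prod.snd := by
  have hbij : Set.BijOn (Prod.map (extendAut σ) (extendAut σ)) hfin.toFinset hfin.toFinset := by
    rw [hfin.coe_toFinset]
    exact (hfin.injOn_iff_bijOn_of_mapsTo hσ).1
      ((extendAut_injective σ).prodMap (extendAut_injective σ)).injOn
  rw [← mapDomain_snd_mapDomain_prodMap (extendAut σ) (extendAut σ), orbitMean,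
    mapDomain_sum_single_of_bijOn hbij]

theorem exists_chain_fst_snd_eq_orbitMean (hfin : (orbit St w x y).Finite) :
    ∃ c ∈ supported ℚ ℚ (orbit St w x y), c.mapDomain Prod.fst = single x 1 ∧
      c.mapDomain Prod.snd = (orbitMean hfin).mapDomain Prod.snd := by
  have hpath := fun a (ha : a ∈ orbit St w x y) =>
    Relation.ReflTransGen.exists_finsupp_mapDomain_fst_snd (R := ℚ)
      (fun _ _ => Adj.fst_eq_or_snd_eq) ha
  choose! d hd hfst hsnd using hpath
  have hn : (hfin.toFinset.card : ℚ) ≠ 0 := Nat.cast_ne_zero.2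
    (Finset.card_ne_zero_of_mem (hfin.mem_toFinset.2 (self_mem_orbit St w x y)))
  refine ⟨∑ a ∈ hfin.toFinset, (hfin.toFinset.card : ℚ)⁻¹ • d a,
    Submodule.sum_mem _ fun a ha => Submodule.smul_mem _ _ (hd a (hfin.mem_toFinset.1 ha)),
    ?_, ?_⟩
  · rw [mapDomain_finsetSum, Finset.sum_congr rfl fun a ha => by
      rw [mapDomain_smul, hfst a (hfin.mem_toFinset.1 ha)], Finset.sum_const,
      ← Nat.cast_smul_eq_nsmul ℚ, smul_smul, mul_inv_cancel₀ hn, one_smul]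
  · rw [orbitMean, mapDomain_finsetSum, mapDomain_finsetSum]
    refine Finset.sum_congr rfl fun a ha => ?_
    rw [mapDomain_smul, hsnd a (hfin.mem_toFinset.1 ha), mapDomain_single, smul_single_one]

end Orbit

section Decoupling

variable {St : Finset (ℤ × ℤ)} {w : ℤ × ℤ → ℂ} {x y : K}

theorem exists_fixed_chain_of_mapsTo_orbit (hfin : (orbit St w x y).Finite)
    (G : Subgroup (orbitF St w x y ≃ₐ[ℂ] orbitF St w x y))
    (hG : ∀ σ ∈ G,
      Set.MapsTo (Prod.map (extendAut σ) (extendAut σ)) (orbit St w x y) (orbit St w x y))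
    {c : (K × K) →₀ ℚ} (hc : c ∈ supported ℚ ℚ (orbit St w x y)) {W : Type*}
    [AddCommGroup W] [Module ℚ W] (f : ((K × K) →₀ ℚ) →ₗ[ℚ] W)
    (hf : ∀ σ ∈ G, f (chainRep _ σ c) = f c) :
    ∃ g ∈ supported ℚ ℚ (orbit St w x y), (∀ σ ∈ G, chainRep _ σ g = g) ∧ f g = f c := by
  let ρ := (chainRep (orbitF St w x y)).comp G.subtype
  have hfinite : (Set.range fun σ => ρ σ c).Finite :=
    (finite_setOf_mapDomain_mapsTo hfin ((mem_supported _ _).1 hc)).subset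
      (by rintro _ ⟨σ, rfl⟩; exact ⟨_, hG σ σ.2, rfl⟩)
  obtain ⟨g, hspan, hfix, hfg⟩ :=
    Representation.exists_fixed_mem_span_of_finite_orbit ρ hfinite f fun σ => hf σ σ.2
  refine ⟨g, Submodule.span_le.2 ?_ hspan, fun σ hσ => hfix ⟨σ, hσ⟩, hfg⟩
  rintro _ ⟨σ, rfl⟩
  refine supported_mono (hG σ σ.2).image_subset ?_
  rw [← lmapDomain_supported]
  exact Submodule.mem_map_of_mem hc

theorem exists_rat_decoupling (hfin : (orbit St w x y).Finite) :
    ∃ gx ∈ supported ℚ ℚ (orbit St w x y), ∃ gy ∈ supported ℚ ℚ (orbit St w x y),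
      (∀ σ ∈ Gx St w x y, chainRep _ σ gx = gx) ∧ (∀ σ ∈ Gy St w x y, chainRep _ σ gy = gy) ∧
      (single (x, y) 1 - gx - gy).mapDomain Prod.fst = 0 ∧
      (single (x, y) 1 - gx - gy).mapDomain Prod.snd = 0 := by
  obtain ⟨c, hc, hfst, hsnd⟩ := exists_chain_fst_snd_eq_orbitMean hfin
  let π : ((K × K) →₀ ℚ) →ₗ[ℚ] (K →₀ ℚ) × (K →₀ ℚ) :=
    (lmapDomain ℚ ℚ Prod.fst).prod (lmapDomain ℚ ℚ Prod.snd)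
  have hπ (σ : orbitF St w x y ≃ₐ[ℂ] orbitF St w x y) (d : (K × K) →₀ ℚ) :
      π (chainRep _ σ d) = ((d.mapDomain Prod.fst).mapDomain (extendAut σ),
        (d.mapDomain Prod.snd).mapDomain (extendAut σ)) :=
    Prod.ext (mapDomain_fst_mapDomain_prodMap _ _ d) (mapDomain_snd_mapDomain_prodMap _ _ d)
  obtain ⟨gx, hgx, hfixx, hπx⟩ := exists_fixed_chain_of_mapsTo_orbit hfin (Gx St w x y)
    (fun _ => mapsTo_orbit_of_mem_Gx) hc π fun σ hσ => by
      rw [hπ]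
      simp [π, hfst, hsnd, extendAut_x_of_mem_Gx hσ,
        mapDomain_snd_orbitMean_of_mapsTo hfin (mapsTo_orbit_of_mem_Gx hσ)]
  obtain ⟨gy, hgy, hfixy, hπy⟩ := exists_fixed_chain_of_mapsTo_orbit hfin (Gy St w x y)
    (fun _ => mapsTo_orbit_of_mem_Gy)
    (sub_mem (single_mem_supported ℚ 1 (self_mem_orbit St w x y)) hc) π fun σ hσ => by
      rw [hπ]
      simp [π, mapDomain_sub, hfst, hsnd, extendAut_y_of_mem_Gy hσ,
        mapDomain_snd_orbitMean_of_mapsTo hfin (mapsTo_orbit_of_mem_Gy hσ)]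
  refine ⟨gx, hgx, gy, hgy, hfixx, hfixy,
    Prod.ext_iff.1 (show π (single (x, y) 1 - gx - gy) = 0 from ?_)⟩
  rw [map_sub, map_sub, hπx, hπy, map_sub, sub_self]

theorem fracEval_eq_fracEval_fst {A B : MvPolynomial (Fin 3) ℂ}
    (hA : A ∈ MvPolynomial.supported ℂ ({0, 2} : Set (Fin 3)))
    (hB : B ∈ MvPolynomial.supported ℂ ({0, 2} : Set (Fin 3))) (a : K × K) :
    fracEval St w x y A B a = fracEval St w x y A B (a.1, y) := by
  have h : ∀ i ∈ ({0, 2} : Set (Fin 3)), ![a.1, a.2, (stepEval St w x y)⁻¹] i =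
      ![a.1, y, (stepEval St w x y)⁻¹] i := by
    rintro i (rfl | rfl) <;> rfl
  unfold fracEval evalPt
  rw [MvPolynomial.aeval_eq_of_mem_supported_s19 hA h, MvPolynomial.aeval_eq_of_mem_supported_s19 hB h]

theorem fracEval_eq_fracEval_snd {A B : MvPolynomial (Fin 3) ℂ}
    (hA : A ∈ MvPolynomial.supported ℂ ({1, 2} : Set (Fin 3)))
    (hB : B ∈ MvPolynomial.supported ℂ ({1, 2} : Set (Fin 3))) (a : K × K) :
    fracEval St w x y A B a = fracEval St w x y A B (x, a.2) := by
  have h : ∀ i ∈ ({1, 2} : Set (Fin 3)), ![a.1, a.2, (stepEval St w x y)⁻¹] i =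
      ![x, a.2, (stepEval St w x y)⁻¹] i := by
    rintro i (rfl | rfl) <;> rfl
  unfold fracEval evalPt
  rw [MvPolynomial.aeval_eq_of_mem_supported_s19 hA h, MvPolynomial.aeval_eq_of_mem_supported_s19 hB h]

theorem cancelsDecoupled_mapRange_ratCast (mx my : ℕ) {α : (K × K) →₀ ℚ}
    (h₁ : α.mapDomain Prod.fst = 0) (h₂ : α.mapDomain Prod.snd = 0) :
    CancelsDecoupled St w mx my x y (α.mapRange ((↑) : ℚ → ℂ) Rat.cast_zero) := by
  intro A₁ B₁ A₂ B₂ hA₁ hB₁ hA₂ hB₂ _ _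
  have hcast {γ : Type} {π : K × K → γ} (hπ : α.mapDomain π = 0) :
      (α.mapRange ((↑) : ℚ → ℂ) Rat.cast_zero).mapDomain π = 0 := by
    rw [mapDomain_mapRange _ _ _ _ Rat.cast_add, hπ, mapRange_zero]
  refine (sum_congr fun a _ => ?_).trans (sum_algebraMap_mul_add_eq_zero (hcast h₁) (hcast h₂)
    (fun u => fracEval St w x y A₁ B₁ (u, y)) fun v => fracEval St w x y A₂ B₂ (x, v))
  rw [fracEval_eq_fracEval_fst hA₁ hB₁, fracEval_eq_fracEval_snd hA₂ hB₂]

end Decoupling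

theorem stmt19_general {K : Type} [Field K] [Algebra ℂ K]
    (St : Finset (ℤ × ℤ)) (w : ℤ × ℤ → ℂ) (x y : K) (mx my : ℕ)
    (hfin : (orbit St w x y).Finite) :
    ∃ gx gy a : (K × K) →₀ ℂ,
      ↑gx.support ⊆ orbit St w x y ∧ ↑gy.support ⊆ orbit St w x y ∧
      ↑a.support ⊆ orbit St w x y ∧
      (∀ p, ∃ q : ℚ, gx p = (q : ℂ)) ∧ (∀ p, ∃ q : ℚ, gy p = (q : ℂ)) ∧
      (∀ p, ∃ q : ℚ, a p = (q : ℂ)) ∧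
      IsDecoupling St w mx my x y gx gy a := by
  obtain ⟨gx, hgx, gy, hgy, hfixx, hfixy, h₁, h₂⟩ := exists_rat_decoupling hfin
  have ha : single (x, y) 1 - gx - gy ∈ supported ℚ ℚ (orbit St w x y) :=
    sub_mem (sub_mem (single_mem_supported ℚ 1 (self_mem_orbit St w x y)) hgx) hgy
  let ι : ((K × K) →₀ ℚ) → (K × K) →₀ ℂ := mapRange (↑) Rat.cast_zero
  have hsupp {g} (hg : g ∈ supported ℚ ℚ (orbit St w x y)) : ↑(ι g).support ⊆ orbit St w x y :=
    (Finset.coe_subset.2 support_mapRange).trans ((mem_supported _ _).1 hg)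
  refine ⟨ι gx, ι gy, ι (single (x, y) 1 - gx - gy), hsupp hgx, hsupp hgy, hsupp ha,
    fun p => ⟨gx p, rfl⟩, fun p => ⟨gy p, rfl⟩, fun p => ⟨_, rfl⟩, ?_,
    fun σ hσ => by rw [actChain_mapRange_ratCast, hfixx σ hσ],
    fun σ hσ => by rw [actChain_mapRange_ratCast, hfixy σ hσ],
    cancelsDecoupled_mapRange_ratCast mx my h₁ h₂⟩
  ext p
  by_cases hp : (x, y) = p <;> simp [ι, hp]

/-- if the orbit is finite, then `(x,y)` admits a decoupling in the
orbit with rational coefficients. -/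
theorem stmt19 {K : Type} [Field K] [Algebra ℂ K]
    (St : Finset (ℤ × ℤ)) (w : ℤ × ℤ → ℂ) (x y : K) (mx my : ℕ)
    (hset : Setting St w x y) (hb : ExponentBounds St mx my)
    (hfin : (orbit St w x y).Finite) :
    ∃ gx gy a : (K × K) →₀ ℂ,
      ↑gx.support ⊆ orbit St w x y ∧ ↑gy.support ⊆ orbit St w x y ∧
      ↑a.support ⊆ orbit St w x y ∧
      (∀ p, ∃ q : ℚ, gx p = (q : ℂ)) ∧ (∀ p, ∃ q : ℚ, gy p = (q : ℂ)) ∧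
      (∀ p, ∃ q : ℚ, a p = (q : ℂ)) ∧
      IsDecoupling St w mx my x y gx gy a :=
  stmt19_general St w x y mx my hfin

end QuadrantWalk
end
end
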